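/- Let f(E,n) = −E + 2(3/2 − n^M)(E² − E³/4) with M ≥ 1 a fixed integer. For every I with 4/9 < I < 4, the quadratic 2E² − (4 + 3I)E + 8I is strictly positive for all E ∈ ℝ; consequently, for every such I and every (E,n) with 0 < E < 4 and f(E,n) + I = 0, one has ∂f/∂E(E,n) < 0. In other words, for I > I₁ = 4/9 the entire critical manifold (in the range 0 < E < 4) is attracting. -/

import Mathlib

/-! Write `f(E, n) = -E + c (E² - E³/4)` with `c = 2 (3/2 - nᴹ)`. On the critical manifold
`c (E² - E³/4) = E - I`, and eliminating `c` gives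
`∂f/∂E · E² (4 - E) / 4 = -E (2E² - (4 + 3I) E + 8I) / 4`.
For `0 < E < 4` the factor `E² (4 - E) / 4` is positive, so `∂f/∂E < 0` as soon as the quadratic
is positive, which holds for all `E` when `4/9 < I < 4` since its discriminant is
`(9I - 4)(I - 4)`. -/

/-- `f(·, n) = karmaCubic (2 (3/2 - nᴹ))`. -/
noncomputable def karmaCubic (c E : ℝ) : ℝ := -E + c * (E ^ 2 - E ^ 3 / 4)

theorem hasDerivAt_karmaCubic (c E : ℝ) :
    HasDerivAt (karmaCubic c) (-1 + c * (2 * E - (3 / 4) * E ^ 2)) E := by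
  have h := (hasDerivAt_id' E).fun_neg.fun_add
    (((hasDerivAt_pow 2 E).fun_sub ((hasDerivAt_pow 3 E).div_const 4)).const_mul c)
  exact h.congr_deriv (by push_cast; ring)

theorem karma_quadratic_pos {I : ℝ} (hI₁ : 4 / 9 < I) (hI₂ : I < 4) (E : ℝ) :
    0 < 2 * E ^ 2 - (4 + 3 * I) * E + 8 * I := by
  have hdisc : 0 < (4 - I) * (9 * I - 4) := mul_pos (by linarith) (by linarith)
  nlinarith [sq_nonneg (4 * E - (4 + 3 * I))]

theorem karmaCubic_deriv_neg_of_critical {c E I : ℝ} (hE₀ : 0 < E) (hE₄ : E < 4)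
    (hcrit : karmaCubic c E + I = 0) (hq : 0 < 2 * E ^ 2 - (4 + 3 * I) * E + 8 * I) :
    -1 + c * (2 * E - (3 / 4) * E ^ 2) < 0 := by
  have hweight : 0 < E ^ 2 * (4 - E) / 4 := by
    have : 0 < 4 - E := by linarith
    positivity
  have hkey : (-1 + c * (2 * E - (3 / 4) * E ^ 2)) * (E ^ 2 * (4 - E) / 4)
      = -((2 * E ^ 2 - (4 + 3 * I) * E + 8 * I) * E) / 4 := by
    unfold karmaCubic at hcrit
    linear_combination (2 * E - 3 / 4 * E ^ 2) * hcrit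
  have hneg : -((2 * E ^ 2 - (4 + 3 * I) * E + 8 * I) * E) / 4 < 0 := by
    have := mul_pos hq hE₀
    linarith
  rw [← hkey] at hneg
  exact neg_of_mul_neg_left hneg hweight.le

theorem karma_attracting_for_large_current_general (M : ℕ) (f : ℝ → ℝ → ℝ)
    (hf : ∀ E n, f E n = -E + 2 * (3 / 2 - n ^ M) * (E ^ 2 - E ^ 3 / 4)) :
    ∀ I : ℝ, 4 / 9 < I → I < 4 →
      (∀ E : ℝ, 0 < 2 * E ^ 2 - (4 + 3 * I) * E + 8 * I) ∧
      (∀ E n : ℝ, 0 < E → E < 4 → f E n + I = 0 →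
        HasDerivAt (fun E' => f E' n)
          (-1 + 2 * (3 / 2 - n ^ M) * (2 * E - (3 / 4) * E ^ 2)) E ∧
        -1 + 2 * (3 / 2 - n ^ M) * (2 * E - (3 / 4) * E ^ 2) < 0) := by
  intro I hI₁ hI₂
  refine ⟨karma_quadratic_pos hI₁ hI₂, fun E n hE₀ hE₄ hcrit => ?_⟩
  have hslice : (fun E' => f E' n) = karmaCubic (2 * (3 / 2 - n ^ M)) := funext (hf · n)
  have hcrit' : karmaCubic (2 * (3 / 2 - n ^ M)) E + I = 0 := by rwa [← congrFun hslice E]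
  rw [hslice]
  exact ⟨hasDerivAt_karmaCubic _ E,
    karmaCubic_deriv_neg_of_critical hE₀ hE₄ hcrit' (karma_quadratic_pos hI₁ hI₂ E)⟩

/-- For `4/9 < I < 4`, the quadratic `2E² - (4 + 3I)E + 8I` is strictly
positive for all real `E`; consequently at every point of the Karma critical
manifold `{f + I = 0}` with `0 < E < 4` the fast-variable partial derivative
`∂f/∂E` is negative, i.e. the entire critical manifold is attracting there. -/
theorem karma_attracting_for_large_current (M : ℕ) (hM : 1 ≤ M) (f : ℝ → ℝ → ℝ)
    (hf : ∀ E n, f E n = -E + 2 * (3 / 2 - n ^ M) * (E ^ 2 - E ^ 3 / 4)) :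
    ∀ I : ℝ, 4 / 9 < I → I < 4 →
      (∀ E : ℝ, 0 < 2 * E ^ 2 - (4 + 3 * I) * E + 8 * I) ∧
      (∀ E n : ℝ, 0 < E → E < 4 → f E n + I = 0 →
        HasDerivAt (fun E' => f E' n)
          (-1 + 2 * (3 / 2 - n ^ M) * (2 * E - (3 / 4) * E ^ 2)) E ∧
        -1 + 2 * (3 / 2 - n ^ M) * (2 * E - (3 / 4) * E ^ 2) < 0) :=
  karma_attracting_for_large_current_general M f hf
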